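/- For k = 1,…,N let A⁽ᵏ⁾ be n×n, B⁽ᵏ⁾ be n×m, and C_z⁽ᵏ⁾ be r×n real matrices. Suppose there exist an n×n real symmetric positive definite matrix P and a real γ > 0 such that for every k the block matrix [[(A⁽ᵏ⁾)ᵀP + PA⁽ᵏ⁾ + (C_z⁽ᵏ⁾)ᵀC_z⁽ᵏ⁾, PB⁽ᵏ⁾], [(B⁽ᵏ⁾)ᵀP, −γI]] is negative semidefinite. Then for any nonnegative reals α₁,…,α_N with Σₖ αₖ = 1, writing A := Σₖ αₖ A⁽ᵏ⁾, B := Σₖ αₖ B⁽ᵏ⁾, C_z := Σₖ αₖ C_z⁽ᵏ⁾, every differentiable x : ℝ → ℝⁿ and continuous u : ℝ → ℝᵐ with x'(t) = A x(t) + B u(t) and x(0) = 0 satisfy ∫₀ᵀ ‖C_z x(t)‖² dt ≤ γ ∫₀ᵀ ‖u(t)‖² dt for every T ≥ 0. -/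

import Mathlib

/-!
With the storage function `V(x) = xᵀ P x`, the vertex LMI says exactly that the dissipation gap
`V̇ + ‖z‖² - γ ‖u‖²`, a quadratic form in `(x, u)`, is nonpositive at every vertex. For fixed
`(x, u)` the gap is a convex function of `(ẋ, z) = (A x + B u, C_z x)`, which depends linearly on
the system matrices, so by Jensen it stays nonpositive on the whole polytope. Integrating
`V̇ + ‖z‖² ≤ γ ‖u‖²` over `[0, T]` and using `V(x(0)) = 0 ≤ V(x(T))` gives the gain bound.
-/

open Matrix Finset intervalIntegral

theorem EuclideanSpace.real_norm_toLp_sq {ι : Type*} [Fintype ι] (v : ι → ℝ) :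
    ‖(WithLp.toLp 2 v : EuclideanSpace ℝ ι)‖ ^ 2 = v ⬝ᵥ v := by
  rw [EuclideanSpace.real_norm_sq_eq]
  simp [dotProduct, sq]

theorem HasDerivAt.dotProduct {ι : Type*} [Fintype ι] {f g : ℝ → ι → ℝ} {f' g' : ι → ℝ}
    {t : ℝ} (hf : HasDerivAt f f' t) (hg : HasDerivAt g g' t) :
    HasDerivAt (fun s => f s ⬝ᵥ g s) (f' ⬝ᵥ g t + f t ⬝ᵥ g') t := by
  simp only [_root_.dotProduct, ← sum_add_distrib]
  exact HasDerivAt.fun_sum fun i _ => (hasDerivAt_pi.mp hf i).fun_mul (hasDerivAt_pi.mp hg i)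

theorem HasDerivAt.mulVec {ι κ : Type*} [Fintype ι] [Fintype κ] (M : Matrix ι κ ℝ)
    {f : ℝ → κ → ℝ} {f' : κ → ℝ} {t : ℝ} (hf : HasDerivAt f f' t) :
    HasDerivAt (fun s => M *ᵥ f s) (M *ᵥ f') t :=
  (LinearMap.toContinuousLinearMap M.mulVecLin).hasFDerivAt.comp_hasDerivAt t hf

theorem sub_add_integral_le_integral_of_hasDerivAt_add_le {V V' s w : ℝ → ℝ} {a b : ℝ}
    (hab : a ≤ b) (hV : ContinuousOn V (Set.Icc a b))
    (hderiv : ∀ t ∈ Set.Ioo a b, HasDerivAt V (V' t) t)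
    (hs : IntervalIntegrable s MeasureTheory.volume a b)
    (hw : IntervalIntegrable w MeasureTheory.volume a b)
    (hle : ∀ t ∈ Set.Ioo a b, V' t + s t ≤ w t) :
    V b - V a + ∫ t in a..b, s t ≤ ∫ t in a..b, w t := by
  have hV_le := sub_le_integral_of_hasDeriv_right_of_le hab hV
    (fun t ht => (hderiv t ht).hasDerivWithinAt)
    ((intervalIntegrable_iff_integrableOn_Icc_of_le hab).mp (hw.sub hs))
    (fun t ht => le_sub_iff_add_le.mpr (hle t ht))
  rw [integral_sub hw hs] at hV_le
  linarith

section DissipationGap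

variable {n m r : Type*} [Fintype n] [Fintype m] [Fintype r]

/-- For `p = (ẋ, z)` this is `d/dt (xᵀ P x) + ‖z‖² - γ ‖u‖²` at a point where the state has
velocity `ẋ` and the output is `z`. -/
def dissipationGap (P : Matrix n n ℝ) (γ : ℝ) (x : n → ℝ) (u : m → ℝ)
    (p : (n → ℝ) × (r → ℝ)) : ℝ :=
  p.1 ⬝ᵥ (P *ᵥ x) + x ⬝ᵥ (P *ᵥ p.1) + p.2 ⬝ᵥ p.2 - γ * (u ⬝ᵥ u)

theorem dissipationGap_eq_dotProduct_fromBlocks_mulVec [DecidableEq m]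
    (A : Matrix n n ℝ) (B : Matrix n m ℝ) (C : Matrix r n ℝ) (P : Matrix n n ℝ) (γ : ℝ)
    (x : n → ℝ) (u : m → ℝ) :
    dissipationGap P γ x u (A *ᵥ x + B *ᵥ u, C *ᵥ x) =
      Sum.elim x u ⬝ᵥ (fromBlocks (Aᵀ * P + P * A + Cᵀ * C) (P * B) (Bᵀ * P)
        (-(γ • (1 : Matrix m m ℝ))) *ᵥ Sum.elim x u) := by
  simp only [dissipationGap, fromBlocks_mulVec, sumElim_dotProduct_sumElim, Sum.elim_comp_inl,
    Sum.elim_comp_inr, add_mulVec, mulVec_add, ← mulVec_mulVec, neg_mulVec, smul_mulVec,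
    one_mulVec, dotProduct_add, add_dotProduct, dotProduct_neg, dotProduct_smul, smul_eq_mul,
    dotProduct_mulVec x Aᵀ, dotProduct_mulVec x Cᵀ, dotProduct_mulVec u Bᵀ, vecMul_transpose]
  ring

theorem dissipationGap_nonpos_of_posSemidef [DecidableEq m]
    {A : Matrix n n ℝ} {B : Matrix n m ℝ} {C : Matrix r n ℝ} {P : Matrix n n ℝ} {γ : ℝ}
    (hLMI : (-(fromBlocks (Aᵀ * P + P * A + Cᵀ * C) (P * B) (Bᵀ * P)
      (-(γ • (1 : Matrix m m ℝ))))).PosSemidef) (x : n → ℝ) (u : m → ℝ) :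
    dissipationGap P γ x u (A *ᵥ x + B *ᵥ u, C *ᵥ x) ≤ 0 := by
  have hquad := hLMI.dotProduct_mulVec_nonneg (Sum.elim x u)
  rw [dissipationGap_eq_dotProduct_fromBlocks_mulVec]
  simpa [neg_mulVec] using hquad

theorem convexOn_dissipationGap (P : Matrix n n ℝ) (γ : ℝ) (x : n → ℝ) (u : m → ℝ) :
    ConvexOn ℝ Set.univ (dissipationGap (r := r) P γ x u) := by
  let ℓ : (n → ℝ) × (r → ℝ) →ₗ[ℝ] ℝ :=
    ((dotProductBilin ℝ ℝ).flip (P *ᵥ x) + dotProductBilin ℝ ℝ x ∘ₗ P.mulVecLin) ∘ₗ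
      LinearMap.fst ℝ _ _
  let E : (n → ℝ) × (r → ℝ) →ₗ[ℝ] EuclideanSpace ℝ r :=
    (EuclideanSpace.equiv r ℝ).symm.toLinearMap ∘ₗ LinearMap.snd ℝ _ _
  have hquad : ConvexOn ℝ Set.univ fun p => ‖E p‖ ^ 2 :=
    (convexOn_univ_norm.comp_linearMap E).pow (fun _ _ => norm_nonneg _) 2
  refine (((ℓ.convexOn convex_univ).add hquad).sub
    (concaveOn_const (γ * (u ⬝ᵥ u)) convex_univ)).congr fun p _ => ?_
  simp [ℓ, E, dissipationGap, EuclideanSpace.real_norm_toLp_sq]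

theorem dissipationGap_sum_smul_nonpos [DecidableEq m] {ι : Type*} [Fintype ι]
    {A : ι → Matrix n n ℝ} {B : ι → Matrix n m ℝ} {C : ι → Matrix r n ℝ} {P : Matrix n n ℝ}
    {γ : ℝ} (hLMI : ∀ k, (-(fromBlocks ((A k)ᵀ * P + P * A k + (C k)ᵀ * C k) (P * B k)
      ((B k)ᵀ * P) (-(γ • (1 : Matrix m m ℝ))))).PosSemidef)
    {α : ι → ℝ} (hα : ∀ k, 0 ≤ α k) (hsum : ∑ k, α k = 1) (x : n → ℝ) (u : m → ℝ) :
    dissipationGap P γ x u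
      ((∑ k, α k • A k) *ᵥ x + (∑ k, α k • B k) *ᵥ u, (∑ k, α k • C k) *ᵥ x) ≤ 0 := by
  have hvertices : ((∑ k, α k • A k) *ᵥ x + (∑ k, α k • B k) *ᵥ u, (∑ k, α k • C k) *ᵥ x) =
      ∑ k, α k • (A k *ᵥ x + B k *ᵥ u, C k *ᵥ x) := by
    simp [Prod.ext_iff, Prod.fst_sum, Prod.snd_sum, sum_mulVec, smul_mulVec, sum_add_distrib]
  calc _ ≤ ∑ k, α k • dissipationGap P γ x u (A k *ᵥ x + B k *ᵥ u, C k *ᵥ x) := by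
        rw [hvertices]
        exact (convexOn_dissipationGap P γ x u).map_sum_le (fun k _ => hα k) hsum
          (fun _ _ => Set.mem_univ _)
    _ ≤ 0 := sum_nonpos fun k _ =>
        smul_nonpos_of_nonneg_of_nonpos (hα k) (dissipationGap_nonpos_of_posSemidef (hLMI k) x u)

end DissipationGap

theorem statement9_general (n m r N : ℕ)
    (A : Fin N → Matrix (Fin n) (Fin n) ℝ) (B : Fin N → Matrix (Fin n) (Fin m) ℝ)
    (Cz : Fin N → Matrix (Fin r) (Fin n) ℝ)
    (P : Matrix (Fin n) (Fin n) ℝ) (hP : P.PosDef) (γ : ℝ)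
    (hLMI : ∀ k,
      (-(Matrix.fromBlocks
          ((A k)ᵀ * P + P * A k + (Cz k)ᵀ * Cz k) (P * B k)
          ((B k)ᵀ * P) (-(γ • (1 : Matrix (Fin m) (Fin m) ℝ))))).PosSemidef)
    (α : Fin N → ℝ) (hα : ∀ k, 0 ≤ α k) (hsum : ∑ k, α k = 1)
    (x : ℝ → (Fin n → ℝ)) (u : ℝ → (Fin m → ℝ))
    (hx : ∀ t, HasDerivAt x
      ((∑ k, α k • A k).mulVec (x t) + (∑ k, α k • B k).mulVec (u t)) t)
    (hu : Continuous u) (hx0 : x 0 = 0) :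
    ∀ T : ℝ, 0 ≤ T →
      ∫ t in (0:ℝ)..T,
          ‖(EuclideanSpace.equiv (Fin r) ℝ).symm ((∑ k, α k • Cz k).mulVec (x t))‖ ^ 2
        ≤ γ * ∫ t in (0:ℝ)..T, ‖(EuclideanSpace.equiv (Fin m) ℝ).symm (u t)‖ ^ 2 := by
  intro T hT
  have hxc : Continuous x := continuous_iff_continuousAt.mpr fun t => (hx t).continuousAt
  have hVc : Continuous fun t => x t ⬝ᵥ (P *ᵥ x t) :=
    hxc.dotProduct (continuous_const.matrix_mulVec hxc)
  have hzc : Continuous fun t => (∑ k, α k • Cz k) *ᵥ x t := continuous_const.matrix_mulVec hxc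
  have hdissipation := sub_add_integral_le_integral_of_hasDerivAt_add_le
    (V := fun t => x t ⬝ᵥ (P *ᵥ x t)) (w := fun t => γ * (u t ⬝ᵥ u t)) hT hVc.continuousOn
    (fun t _ => (hx t).dotProduct ((hx t).mulVec P))
    ((hzc.dotProduct hzc).intervalIntegrable 0 T)
    ((continuous_const.mul (hu.dotProduct hu)).intervalIntegrable 0 T)
    (fun t _ => sub_nonpos.mp (dissipationGap_sum_smul_nonpos hLMI hα hsum (x t) (u t)))
  have hV0 : x 0 ⬝ᵥ (P *ᵥ x 0) = 0 := by simp [hx0]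
  have hVT : 0 ≤ x T ⬝ᵥ (P *ᵥ x T) := by
    simpa using hP.posSemidef.dotProduct_mulVec_nonneg (x T)
  simp only [PiLp.continuousLinearEquiv_symm_apply, EuclideanSpace.real_norm_toLp_sq,
    ← integral_const_mul]
  linarith

/-- Lemma 2, polytopic Bounded Real Lemma: if the block LMI
`[[(A k)ᵀP + P(A k) + (C k)ᵀ(C k), P (B k)], [(B k)ᵀ P, -γ I]] ⪯ 0` holds at every
vertex `k`, then for every convex combination `(A, B, C_z)` of the vertices, every
trajectory of `x' = A x + B u` with `x(0) = 0` satisfies the finite-horizon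
`L₂`-gain bound `∫₀ᵀ ‖C_z x(t)‖² dt ≤ γ ∫₀ᵀ ‖u(t)‖² dt`. -/
theorem statement9 (n m r N : ℕ)
    (A : Fin N → Matrix (Fin n) (Fin n) ℝ) (B : Fin N → Matrix (Fin n) (Fin m) ℝ)
    (Cz : Fin N → Matrix (Fin r) (Fin n) ℝ)
    (P : Matrix (Fin n) (Fin n) ℝ) (hP : P.PosDef) (γ : ℝ) (hγ : 0 < γ)
    (hLMI : ∀ k,
      (-(Matrix.fromBlocks
          ((A k)ᵀ * P + P * A k + (Cz k)ᵀ * Cz k) (P * B k)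
          ((B k)ᵀ * P) (-(γ • (1 : Matrix (Fin m) (Fin m) ℝ))))).PosSemidef)
    (α : Fin N → ℝ) (hα : ∀ k, 0 ≤ α k) (hsum : ∑ k, α k = 1)
    (x : ℝ → (Fin n → ℝ)) (u : ℝ → (Fin m → ℝ))
    (hx : ∀ t, HasDerivAt x
      ((∑ k, α k • A k).mulVec (x t) + (∑ k, α k • B k).mulVec (u t)) t)
    (hu : Continuous u) (hx0 : x 0 = 0) :
    ∀ T : ℝ, 0 ≤ T →
      ∫ t in (0:ℝ)..T,
          ‖(EuclideanSpace.equiv (Fin r) ℝ).symm ((∑ k, α k • Cz k).mulVec (x t))‖ ^ 2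
        ≤ γ * ∫ t in (0:ℝ)..T, ‖(EuclideanSpace.equiv (Fin m) ℝ).symm (u t)‖ ^ 2 :=
  statement9_general n m r N A B Cz P hP γ hLMI α hα hsum x u hx hu hx0
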